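/- arXiv:2507.08909 — 8 statements merged into one kernel-verified Lean document; each statement's English description precedes it below -/
import Mathlib

section
/- Let J, K, H be finite-dimensional complex inner product spaces, let T : J → K be a surjective linear map and S : K → H a linear map. Then det((S ∘ T)* (S ∘ T)) = det(S* S) · det(T* T), where the adjoints and determinants are taken of the endomorphisms (S∘T)*(S∘T) of J, S*S of K, and T*T of J respectively. -/
/-!
If `T` is injective it is an isomorphism `J ≃ K`, and `T* (S* S) T` is `T* T` composed with the
conjugate `T⁻¹ (S* S) T` of `S* S`, so the determinant splits. Otherwise `S ∘ T` and `T` share a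
nonzero kernel vector, which both `(S ∘ T)* (S ∘ T)` and `T* T` annihilate, and both sides vanish.
-/

namespace LinearMap

variable {R M N : Type*} [Field R] [AddCommGroup M] [Module R M] [AddCommGroup N] [Module R N]

theorem det_comp_eq_zero_of_not_injective [FiniteDimensional R M] (g : M →ₗ[R] N)
    (f : N →ₗ[R] M) (hg : ¬Function.Injective g) : LinearMap.det (f ∘ₗ g) = 0 := by
  rw [LinearMap.det_eq_zero_iff_ker_ne_bot]
  rw [← ker_eq_bot] at hg
  exact fun h ↦ hg (le_bot_iff.mp (h ▸ ker_le_ker_comp g f))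

theorem det_comp_comp_linearEquiv (e : M ≃ₗ[R] N) (f : N →ₗ[R] M) (A : N →ₗ[R] N) :
    LinearMap.det (f ∘ₗ A ∘ₗ e.toLinearMap) =
      LinearMap.det A * LinearMap.det (f ∘ₗ e.toLinearMap) := by
  have hconj : f ∘ₗ A ∘ₗ e.toLinearMap =
      (f ∘ₗ e.toLinearMap) ∘ₗ (e.symm.toLinearMap ∘ₗ A ∘ₗ e.toLinearMap) := by
    ext x; simp
  rw [hconj, det_comp, mul_comm]
  congr 1
  simpa using det_conj A e.symm

end LinearMap

open LinearMap in
/-- Multiplicativity of the absolute determinant: for a surjective linear map `T : J → K`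
and a linear map `S : K → H` between finite-dimensional complex inner product spaces,
`det ((S ∘ T)* (S ∘ T)) = det (S* S) · det (T* T)`. -/
theorem stmt_0 {J K H : Type*}
    [NormedAddCommGroup J] [InnerProductSpace ℂ J] [FiniteDimensional ℂ J]
    [NormedAddCommGroup K] [InnerProductSpace ℂ K] [FiniteDimensional ℂ K]
    [NormedAddCommGroup H] [InnerProductSpace ℂ H] [FiniteDimensional ℂ H]
    (T : J →ₗ[ℂ] K) (S : K →ₗ[ℂ] H) (hT : Function.Surjective T) :
    LinearMap.det (LinearMap.adjoint (S ∘ₗ T) ∘ₗ (S ∘ₗ T)) =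
      LinearMap.det (LinearMap.adjoint S ∘ₗ S) * LinearMap.det (LinearMap.adjoint T ∘ₗ T) := by
  by_cases hinj : Function.Injective T
  · have hcomp : adjoint (S ∘ₗ T) ∘ₗ (S ∘ₗ T) = adjoint T ∘ₗ (adjoint S ∘ₗ S) ∘ₗ T := by
      rw [adjoint_comp]; rfl
    rw [hcomp]
    exact det_comp_comp_linearEquiv (LinearEquiv.ofBijective T ⟨hinj, hT⟩) _ _
  · have hST : ¬Function.Injective (S ∘ₗ T) := fun h ↦ hinj (Function.Injective.of_comp (f := S) h)
    rw [det_comp_eq_zero_of_not_injective _ _ hST, det_comp_eq_zero_of_not_injective _ _ hinj,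
      mul_zero]
end

section
/- Let H be a finite-dimensional complex inner product space, T : ℂ^k → H and S : ℂ^ℓ → H linear maps, and let [T,S] : ℂ^k ⊕ ℂ^ℓ → H be the combined map (x,y) ↦ Tx + Sy. Let P be the orthogonal projection of H onto the range of S and P⊥ = 1 − P. Then det([T,S]* [T,S]) = det(S* S) · det((P⊥ T)* (P⊥ T)). -/
/-- The combined map `[T,S] : ℂ^ι ⊕ ℂ^κ → H`, `(x, y) ↦ T x + S y`. -/
noncomputable def combinedMap {ι κ H : Type*}
    [NormedAddCommGroup H] [InnerProductSpace ℂ H]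
    (T : EuclideanSpace ℂ ι →ₗ[ℂ] H) (S : EuclideanSpace ℂ κ →ₗ[ℂ] H) :
    EuclideanSpace ℂ (ι ⊕ κ) →ₗ[ℂ] H :=
  T ∘ₗ (WithLp.linearEquiv 2 ℂ (ι → ℂ)).symm.toLinearMap ∘ₗ LinearMap.funLeft ℂ ℂ Sum.inl ∘ₗ
      (WithLp.linearEquiv 2 ℂ (ι ⊕ κ → ℂ)).toLinearMap +
    S ∘ₗ (WithLp.linearEquiv 2 ℂ (κ → ℂ)).symm.toLinearMap ∘ₗ LinearMap.funLeft ℂ ℂ Sum.inr ∘ₗ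
      (WithLp.linearEquiv 2 ℂ (ι ⊕ κ → ℂ)).toLinearMap

/-- `P⊥ = 1 - P`, where `P` is the orthogonal projection onto the submodule `M`. -/
noncomputable def perpProj {H : Type*} [NormedAddCommGroup H] [InnerProductSpace ℂ H]
    [FiniteDimensional ℂ H] (M : Submodule ℂ H) : H →ₗ[ℂ] H :=
  LinearMap.id - M.subtype ∘ₗ (M.orthogonalProjectionOnto).toLinearMap

/-!
Choose `R` with `S ∘ R = P ∘ T`, so that `T = P⊥T + S R`. Then `[T, S] = [P⊥T, S] ∘ E` for the
unipotent shear `E (x, y) = (x, R x + y)`, which leaves the Gram determinant unchanged; and the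
Gram matrix of `[P⊥T, S]` is block diagonal, since the range of `P⊥T` is orthogonal to that of `S`.
-/

open LinearMap
open scoped Matrix

namespace Matrix

variable {R m n n₁ n₂ : Type*} [CommRing R] [StarRing R] [Fintype m] [Fintype n] [DecidableEq n]
  [Fintype n₁] [Fintype n₂] [DecidableEq n₁] [DecidableEq n₂]

lemma det_conjTranspose_mul_self_mul_of_det_eq_one (M : Matrix m n R) {E : Matrix n n R}
    (hE : E.det = 1) : ((M * E)ᴴ * (M * E)).det = (Mᴴ * M).det := by
  rw [conjTranspose_mul, Matrix.mul_assoc, ← Matrix.mul_assoc Mᴴ, det_mul, det_mul,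
    det_conjTranspose, hE, star_one, one_mul, mul_one]

lemma det_conjTranspose_mul_self_fromCols_of_orthogonal (A : Matrix m n₁ R) (B : Matrix m n₂ R)
    (hAB : Aᴴ * B = 0) :
    ((fromCols A B)ᴴ * fromCols A B).det = (Aᴴ * A).det * (Bᴴ * B).det := by
  have hBA : Bᴴ * A = 0 := by
    rw [← conjTranspose_conjTranspose A, ← conjTranspose_mul, hAB, conjTranspose_zero]
  rw [conjTranspose_fromCols_eq_fromRows_conjTranspose, fromRows_mul_fromCols, hAB, hBA,
    det_fromBlocks_zero₂₁]

lemma det_conjTranspose_mul_self_fromCols_add_mul (A : Matrix m n₁ R) (B : Matrix m n₂ R)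
    (C : Matrix n₂ n₁ R) (hAB : Aᴴ * B = 0) :
    ((fromCols (A + B * C) B)ᴴ * fromCols (A + B * C) B).det = (Aᴴ * A).det * (Bᴴ * B).det := by
  have hshear : fromCols (A + B * C) B = fromCols A B * fromBlocks (1 : Matrix n₁ n₁ R) 0 C 1 := by
    rw [fromCols_mul_fromBlocks]; simp
  rw [hshear, det_conjTranspose_mul_self_mul_of_det_eq_one _ (by simp),
    det_conjTranspose_mul_self_fromCols_of_orthogonal A B hAB]

end Matrix

section Adjoint

variable {𝕜 E F G : Type*} [RCLike 𝕜] [NormedAddCommGroup E] [InnerProductSpace 𝕜 E]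
  [FiniteDimensional 𝕜 E] [NormedAddCommGroup F] [InnerProductSpace 𝕜 F] [FiniteDimensional 𝕜 F]

lemma LinearMap.det_adjoint_comp_self_eq_det_toMatrix {m n : Type*} [Fintype m] [DecidableEq m]
    [Fintype n] [DecidableEq n] (v₁ : OrthonormalBasis n 𝕜 E) (v₂ : OrthonormalBasis m 𝕜 F)
    (f : E →ₗ[𝕜] F) :
    LinearMap.det (adjoint f ∘ₗ f) =
      ((toMatrix v₁.toBasis v₂.toBasis f)ᴴ * toMatrix v₁.toBasis v₂.toBasis f).det := by
  rw [← det_toMatrix v₁.toBasis, toMatrix_comp v₁.toBasis v₂.toBasis v₁.toBasis, toMatrix_adjoint]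

lemma LinearMap.adjoint_comp_eq_zero_of_range_le_orthogonal [NormedAddCommGroup G]
    [InnerProductSpace 𝕜 G] [FiniteDimensional 𝕜 G] {f : E →ₗ[𝕜] F} {g : G →ₗ[𝕜] F}
    (h : range f ≤ (range g)ᗮ) : adjoint f ∘ₗ g = 0 := by
  ext x
  refine ext_inner_right 𝕜 fun y ↦ ?_
  rw [comp_apply, adjoint_inner_left, zero_apply, inner_zero_left]
  exact Submodule.inner_right_of_mem_orthogonal (mem_range_self g x) (h (mem_range_self f y))

end Adjoint

section CombinedMap

variable {ι κ H : Type*} [DecidableEq ι] [DecidableEq κ] [NormedAddCommGroup H]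
  [InnerProductSpace ℂ H] (T : EuclideanSpace ℂ ι →ₗ[ℂ] H) (S : EuclideanSpace ℂ κ →ₗ[ℂ] H)

lemma combinedMap_single_inl (j : ι) (a : ℂ) :
    combinedMap T S (EuclideanSpace.single (Sum.inl j) a) = T (EuclideanSpace.single j a) := by
  have h₁ : Pi.single (M := fun _ : ι ⊕ κ ↦ ℂ) (Sum.inl j) a ∘ Sum.inl = Pi.single j a := by
    ext i; simp [Pi.single_apply]
  have h₂ : Pi.single (M := fun _ : ι ⊕ κ ↦ ℂ) (Sum.inl j) a ∘ Sum.inr = 0 := by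
    ext i; simp
  simp [combinedMap, funLeft, h₁, h₂]

lemma combinedMap_single_inr (j : κ) (a : ℂ) :
    combinedMap T S (EuclideanSpace.single (Sum.inr j) a) = S (EuclideanSpace.single j a) := by
  have h₁ : Pi.single (M := fun _ : ι ⊕ κ ↦ ℂ) (Sum.inr j) a ∘ Sum.inr = Pi.single j a := by
    ext i; simp [Pi.single_apply]
  have h₂ : Pi.single (M := fun _ : ι ⊕ κ ↦ ℂ) (Sum.inr j) a ∘ Sum.inl = 0 := by
    ext i; simp
  simp [combinedMap, funLeft, h₁, h₂]

lemma toMatrix_combinedMap [Fintype ι] [Fintype κ] {m : Type*} [Fintype m] [DecidableEq m]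
    (b : Module.Basis m ℂ H) :
    toMatrix (EuclideanSpace.basisFun (ι ⊕ κ) ℂ).toBasis b (combinedMap T S) =
      Matrix.fromCols (toMatrix (EuclideanSpace.basisFun ι ℂ).toBasis b T)
        (toMatrix (EuclideanSpace.basisFun κ ℂ).toBasis b S) := by
  ext i (j | j) <;> simp [toMatrix_apply, combinedMap_single_inl, combinedMap_single_inr]

end CombinedMap

section PerpProj

variable {H V : Type*} [NormedAddCommGroup H] [InnerProductSpace ℂ H] [FiniteDimensional ℂ H]
  [AddCommGroup V] [Module ℂ V]

lemma perpProj_apply (M : Submodule ℂ H) (x : H) : perpProj M x = x - M.starProjection x := rfl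

lemma range_perpProj_comp_le_orthogonal (M : Submodule ℂ H) (f : V →ₗ[ℂ] H) :
    range (perpProj M ∘ₗ f) ≤ Mᗮ := by
  rintro _ ⟨x, rfl⟩
  exact M.sub_starProjection_mem_orthogonal (f x)

lemma exists_eq_perpProj_comp_add_comp {W : Type*} [AddCommGroup W] [Module ℂ W]
    (T : V →ₗ[ℂ] H) (S : W →ₗ[ℂ] H) :
    ∃ R : V →ₗ[ℂ] W, T = perpProj (range S) ∘ₗ T + S ∘ₗ R := by
  obtain ⟨R, hR⟩ := Module.projective_lifting_property S.rangeRestrict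
    ((range S).orthogonalProjectionOnto.toLinearMap ∘ₗ T) S.surjective_rangeRestrict
  refine ⟨R, ext fun x ↦ ?_⟩
  have hSR : S (R x) = (range S).starProjection (T x) := congrArg Subtype.val (congr($hR x))
  simp [perpProj_apply, hSR]

end PerpProj

/-- Chain rule for log-determinant entropy:
`det ([T,S]* [T,S]) = det (S* S) · det ((P⊥ T)* (P⊥ T))`, where `P` is the orthogonal
projection of `H` onto the range of `S`. -/
theorem stmt_1 {k ℓ : ℕ} {H : Type*}
    [NormedAddCommGroup H] [InnerProductSpace ℂ H] [FiniteDimensional ℂ H]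
    (T : EuclideanSpace ℂ (Fin k) →ₗ[ℂ] H) (S : EuclideanSpace ℂ (Fin ℓ) →ₗ[ℂ] H) :
    LinearMap.det (LinearMap.adjoint (combinedMap T S) ∘ₗ combinedMap T S) =
      LinearMap.det (LinearMap.adjoint S ∘ₗ S) *
        LinearMap.det (LinearMap.adjoint (perpProj (LinearMap.range S) ∘ₗ T) ∘ₗ
          (perpProj (LinearMap.range S) ∘ₗ T)) := by
  obtain ⟨R, hT⟩ := exists_eq_perpProj_comp_add_comp T S
  set Q := perpProj (range S) ∘ₗ T
  have hQS : adjoint Q ∘ₗ S = 0 :=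
    adjoint_comp_eq_zero_of_range_le_orthogonal (range_perpProj_comp_le_orthogonal _ T)
  let b := stdOrthonormalBasis ℂ H
  let e (n : ℕ) := EuclideanSpace.basisFun (Fin n) ℂ
  rw [det_adjoint_comp_self_eq_det_toMatrix (EuclideanSpace.basisFun _ ℂ) b,
    det_adjoint_comp_self_eq_det_toMatrix (e ℓ) b, det_adjoint_comp_self_eq_det_toMatrix (e k) b,
    toMatrix_combinedMap, hT, map_add, toMatrix_comp _ (e ℓ).toBasis, mul_comm]
  refine Matrix.det_conjTranspose_mul_self_fromCols_add_mul _ _ _ ?_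
  rw [← toMatrix_adjoint, ← toMatrix_comp, hQS, map_zero]
end

section
/- Let Q be an n×n complex positive semidefinite matrix and let α, β ⊆ {1,…,n}. Then det(Q[α ∪ β]) · det(Q[α ∩ β]) ≤ det(Q[α]) · det(Q[β]), where Q[γ] denotes the principal submatrix of Q with rows and columns indexed by γ, and det of the empty matrix is 1. -/
/-!
Restrict `Q` to `α ∪ β` and write it in block form with the `α ∩ β` block `C` first. If `C` is
singular the left-hand side vanishes. Otherwise the Schur complement `N` of `C` is positive
semidefinite, and Schur complements commute with passing to principal submatrices containing `C`,
so `det Q[γ] = det C · det N[γ \ (α ∩ β)]` for `γ = α ∪ β, α, β`. The inequality thus reduces to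
Fischer's inequality `det N ≤ det N[α \ β] · det N[β \ α]`, which is again a Schur complement
argument, combined with the monotonicity `det S ≤ det (S + X)` of the determinant on positive
semidefinite matrices.
-/

open scoped ComplexOrder

namespace Matrix

lemma IsHermitian.exists_eq_fromBlocks {l m α : Type*} [Star α] {M : Matrix (l ⊕ m) (l ⊕ m) α}
    (hM : M.IsHermitian) : ∃ A B D, M = Matrix.fromBlocks A B Bᴴ D := by
  refine ⟨M.toBlocks₁₁, M.toBlocks₁₂, M.toBlocks₂₂, ?_⟩
  conv_lhs => rw [← fromBlocks_toBlocks M]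
  congr
  ext i j
  exact (hM.apply (Sum.inr i) (Sum.inl j)).symm

lemma det_fromBlocks_submatrix_sumMap {R l m k : Type*} [CommRing R] [Fintype l] [DecidableEq l]
    [Fintype k] [DecidableEq k] (A : Matrix l l R) [Invertible A] (B : Matrix l m R)
    (C : Matrix m l R) (D : Matrix m m R) (f : k → m) :
    ((fromBlocks A B C D).submatrix (Sum.map id f) (Sum.map id f)).det =
      A.det * ((D - C * ⅟A * B).submatrix f f).det := by
  have hblocks : (fromBlocks A B C D).submatrix (Sum.map id f) (Sum.map id f) =
      fromBlocks A (B.submatrix id f) (C.submatrix f id) (D.submatrix f f) := by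
    ext (i | i) (j | j) <;> rfl
  rw [hblocks, det_fromBlocks₁₁, ← submatrix_id_id (⅟A),
    ← submatrix_mul _ _ _ id _ Function.bijective_id,
    ← submatrix_mul _ _ _ id _ Function.bijective_id]
  rfl

lemma det_submatrix_val_eq_det_submatrix {R ι κ : Type*} [CommRing R] [Fintype ι] [DecidableEq ι]
    [DecidableEq κ] (Q : Matrix κ κ R) (s : Finset κ) {F : ι → κ} (hF : F.Injective)
    (hs : ∀ x, x ∈ s ↔ ∃ i, F i = x) :
    (Q.submatrix (Subtype.val : s → κ) Subtype.val).det = (Q.submatrix F F).det := by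
  let e : ι ≃ s := Equiv.ofBijective (fun i => ⟨F i, (hs _).2 ⟨i, rfl⟩⟩)
    ⟨fun i j h => hF (congrArg Subtype.val h),
      fun x => ((hs x).1 x.2).imp fun _ hi => Subtype.ext hi⟩
  rw [← det_submatrix_equiv_self e]
  rfl

variable {𝕜 : Type*} [RCLike 𝕜] {l m o : Type*} [Fintype l] [DecidableEq l]

namespace PosSemidef

open scoped MatrixOrder in
lemma one_le_det_one_add {K : Matrix l l 𝕜} (hK : K.PosSemidef) : 1 ≤ (1 + K).det := by
  have hH : (1 + K).IsHermitian := isHermitian_one.add hK.1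
  have h_one_le : ∀ i, 1 ≤ hH.eigenvalues i := by
    intro i
    have hmem : hH.eigenvalues i - 1 + 1 ∈ spectrum ℝ (algebraMap ℝ _ 1 + K) := by
      simpa using hH.eigenvalues_mem_spectrum_real i
    rw [spectrum.add_mem_add_iff] at hmem
    linarith [spectrum_nonneg_of_nonneg hK.nonneg hmem]
  rw [hH.det_eq_prod_eigenvalues, ← RCLike.ofReal_prod, ← RCLike.ofReal_one,
    RCLike.ofReal_le_ofReal]
  exact Finset.one_le_prod fun i _ => h_one_le i

open scoped MatrixOrder in
lemma det_le_det_add {S X : Matrix l l 𝕜} (hS : S.PosSemidef) (hX : X.PosSemidef) :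
    S.det ≤ (S + X).det := by
  by_cases hdet : S.det = 0
  · exact hdet ▸ (hS.add hX).det_nonneg
  obtain ⟨B, rfl⟩ := CStarAlgebra.nonneg_iff_eq_star_mul_self.mp hS.nonneg
  rw [star_eq_conjTranspose] at hdet ⊢
  have hBH : IsUnit Bᴴ.det := (left_ne_zero_of_mul (det_mul Bᴴ B ▸ hdet)).isUnit
  have hB : IsUnit B.det := (right_ne_zero_of_mul (det_mul Bᴴ B ▸ hdet)).isUnit
  have hfactor : Bᴴ * B + X = Bᴴ * (1 + (B⁻¹)ᴴ * X * B⁻¹) * B := by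
    rw [mul_add, add_mul, mul_one, conjTranspose_nonsing_inv, Matrix.mul_assoc, Matrix.mul_assoc,
      nonsing_inv_mul _ hB, ← Matrix.mul_assoc, ← Matrix.mul_assoc, mul_nonsing_inv _ hBH,
      one_mul, mul_one]
  calc (Bᴴ * B).det = (Bᴴ * B).det * 1 := (mul_one _).symm
    _ ≤ (Bᴴ * B).det * (1 + (B⁻¹)ᴴ * X * B⁻¹).det :=
      mul_le_mul_of_nonneg_left (hX.conjTranspose_mul_mul_same B⁻¹).one_le_det_one_add
        hS.det_nonneg
    _ = (Bᴴ * B + X).det := by rw [hfactor, det_mul, det_mul, det_mul]; ring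

variable [Fintype m] [DecidableEq m]

lemma det_le_det_mul_det {M : Matrix (l ⊕ m) (l ⊕ m) 𝕜} (hM : M.PosSemidef) :
    M.det ≤ (M.submatrix Sum.inl Sum.inl).det * (M.submatrix Sum.inr Sum.inr).det := by
  by_cases hdet : M.det = 0
  · rw [hdet]
    exact mul_nonneg (hM.submatrix _).det_nonneg (hM.submatrix _).det_nonneg
  obtain ⟨A, B, D, rfl⟩ := hM.1.exists_eq_fromBlocks
  have hA : A.PosDef := (hM.posDef_iff_det_ne_zero.2 hdet).submatrix Sum.inl_injective
  have := hA.isUnit.invertible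
  have hschur := (PosDef.fromBlocks₁₁ B D hA).1 hM
  rw [det_fromBlocks₁₁, invOf_eq_nonsing_inv]
  calc A.det * (D - Bᴴ * A⁻¹ * B).det
      ≤ A.det * (D - Bᴴ * A⁻¹ * B + Bᴴ * A⁻¹ * B).det :=
        mul_le_mul_of_nonneg_left
          (hschur.det_le_det_add (hA.inv.posSemidef.conjTranspose_mul_mul_same B))
          hA.posSemidef.det_nonneg
    _ = A.det * D.det := by rw [sub_add_cancel]

lemma det_mul_det_le_det_mul_det [Fintype o] [DecidableEq o]
    {M : Matrix (l ⊕ (m ⊕ o)) (l ⊕ (m ⊕ o)) 𝕜} (hM : M.PosSemidef) :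
    M.det * (M.submatrix Sum.inl Sum.inl).det ≤
      (M.submatrix (Sum.map id Sum.inl) (Sum.map id Sum.inl)).det *
        (M.submatrix (Sum.map id Sum.inr) (Sum.map id Sum.inr)).det := by
  obtain ⟨C, B, P, rfl⟩ := hM.1.exists_eq_fromBlocks
  have hC : C.PosSemidef := hM.submatrix Sum.inl
  change _ * C.det ≤ _
  by_cases hdet : C.det = 0
  · rw [hdet, mul_zero]
    exact mul_nonneg (hM.submatrix _).det_nonneg (hM.submatrix _).det_nonneg
  have hCpd : C.PosDef := hC.posDef_iff_det_ne_zero.2 hdet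
  have := hCpd.isUnit.invertible
  set N := P - Bᴴ * ⅟C * B
  have hN : N.PosSemidef := by
    simpa only [N, invOf_eq_nonsing_inv] using (PosDef.fromBlocks₁₁ B P hCpd).1 hM
  rw [det_fromBlocks₁₁, det_fromBlocks_submatrix_sumMap, det_fromBlocks_submatrix_sumMap]
  calc C.det * N.det * C.det = C.det * C.det * N.det := by ring
    _ ≤ C.det * C.det * ((N.submatrix Sum.inl Sum.inl).det * (N.submatrix Sum.inr Sum.inr).det) :=
      mul_le_mul_of_nonneg_left hN.det_le_det_mul_det (mul_nonneg hC.det_nonneg hC.det_nonneg)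
    _ = _ := by ring

end PosSemidef

end Matrix

/-- Koteljanskiĭ (Hadamard–Fischer) inequality: for an `n × n` positive semidefinite matrix `Q`
and index sets `α, β ⊆ {1,…,n}`,
`det Q[α ∪ β] · det Q[α ∩ β] ≤ det Q[α] · det Q[β]`. -/
theorem stmt_4 {n : ℕ} (Q : Matrix (Fin n) (Fin n) ℂ) (hQ : Q.PosSemidef)
    (α β : Finset (Fin n)) :
    (Q.submatrix (Subtype.val : {i // i ∈ α ∪ β} → Fin n)
          (Subtype.val : {i // i ∈ α ∪ β} → Fin n)).det *
        (Q.submatrix (Subtype.val : {i // i ∈ α ∩ β} → Fin n)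
          (Subtype.val : {i // i ∈ α ∩ β} → Fin n)).det ≤
      (Q.submatrix (Subtype.val : {i // i ∈ α} → Fin n)
          (Subtype.val : {i // i ∈ α} → Fin n)).det *
        (Q.submatrix (Subtype.val : {i // i ∈ β} → Fin n)
          (Subtype.val : {i // i ∈ β} → Fin n)).det := by
  let F : {i // i ∈ α ∩ β} ⊕ ({i // i ∈ α \ β} ⊕ {i // i ∈ β \ α}) → Fin n :=
    Sum.elim Subtype.val (Sum.elim Subtype.val Subtype.val)
  have hF : F.Injective := by
    refine Subtype.val_injective.sumElim
      (Subtype.val_injective.sumElim Subtype.val_injective ?_) ?_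
    · rintro ⟨a, ha⟩ ⟨b, hb⟩ rfl
      simp only [Finset.mem_sdiff] at ha hb
      tauto
    · rintro ⟨a, ha⟩ (⟨b, hb⟩ | ⟨b, hb⟩) rfl <;>
        simp only [Finset.mem_sdiff, Finset.mem_inter] at ha hb <;> tauto
  have hkot := (hQ.submatrix F).det_mul_det_le_det_mul_det
  simp only [Matrix.submatrix_submatrix] at hkot
  rw [Matrix.det_submatrix_val_eq_det_submatrix Q (α ∪ β) hF,
    Matrix.det_submatrix_val_eq_det_submatrix Q α
      (hF.comp (Sum.map_injective.2 ⟨Function.injective_id, Sum.inl_injective⟩)),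
    Matrix.det_submatrix_val_eq_det_submatrix Q β
      (hF.comp (Sum.map_injective.2 ⟨Function.injective_id, Sum.inr_injective⟩))]
  · exact hkot
  all_goals
    intro x
    simp only [F, Function.comp_apply, Sum.exists, Sum.map_inl, Sum.map_inr, id_eq, Sum.elim_inl,
      Sum.elim_inr, Subtype.exists, exists_prop, exists_eq_right, Finset.mem_union,
      Finset.mem_inter, Finset.mem_sdiff]
    tauto
end

section
/- For every ε > 0 there exists δ > 0 with the following property. Let v : ℕ≥1 → [0,∞) and define V(n) := 1 + 4 · Σ_{ℓ=1}^{n−1} (n+1−ℓ)² v(ℓ) for n ≥ 1. Let A ≥ 1 and assume that for every n ≥ 1, either v(n) ≤ A e^{εn} or v(n) ≤ δ V(n). Then v(n) ≤ A e^{εn} for every n ≥ 1. Moreover, one may take δ = (1 + 4e^{2ε}(1+e^{−ε})/(1−e^{−ε})³)⁻¹. -/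
/-!
Strong induction on `n`. If `v n ≤ A e^{εn}` there is nothing to prove; otherwise
`v n ≤ δ V(n)`, and the induction hypothesis `v ℓ ≤ A e^{εℓ}` for `ℓ < n` bounds the weighted sum:
with `x = e^{-ε}` and `k = n + 1 - ℓ`, one has `(n+1-ℓ)² e^{εℓ} = e^{ε(n+1)} k² x^k`, and
`∑ k² x^k ≤ x(1+x)/(1-x)³`. Together with `1 ≤ A e^{εn}` this gives `V(n) ≤ δ⁻¹ A e^{εn}`
(the factor `e^{2ε} ≥ 1` in `δ` is slack).
-/

open Finset Real

lemma sum_range_sq_mul_pow_le {x : ℝ} (hx0 : 0 ≤ x) (hx1 : x < 1) (N : ℕ) :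
    ∑ k ∈ range N, (k : ℝ) ^ 2 * x ^ k ≤ x * (1 + x) / (1 - x) ^ 3 := by
  have h1x : 0 < 1 - x := sub_pos.2 hx1
  set F : ℕ → ℝ := fun k =>
    x ^ k * ((k : ℝ) ^ 2 / (1 - x) + 2 * k * x / (1 - x) ^ 2 + x * (1 + x) / (1 - x) ^ 3)
  have hF : ∀ k : ℕ, (k : ℝ) ^ 2 * x ^ k = F k - F (k + 1) := fun k => by
    simp only [F]; push_cast; field_simp; ring
  have hF0 : F 0 = x * (1 + x) / (1 - x) ^ 3 := by simp [F]
  have hFN : 0 ≤ F N := by positivity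
  rw [sum_congr rfl fun k _ => hF k, sum_range_sub', hF0]
  linarith

lemma exp_neg_lt_one {ε : ℝ} (hε : 0 < ε) : exp (-ε) < 1 :=
  exp_lt_one_iff.2 (neg_lt_zero.2 hε)

lemma sum_range_sq_mul_exp_le {ε : ℝ} (hε : 0 < ε) (n : ℕ) :
    ∑ ℓ ∈ range (n + 2), ((n : ℝ) + 1 - ℓ) ^ 2 * exp (ε * ℓ) ≤
      exp (ε * n) * ((1 + exp (-ε)) / (1 - exp (-ε)) ^ 3) := by
  set x := exp (-ε)
  have hterm : ∀ ℓ ∈ range (n + 2), ((n : ℝ) + 1 - ℓ) ^ 2 * exp (ε * ℓ) =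
      exp (ε * (n + 1)) * (((n + 2 - 1 - ℓ : ℕ) : ℝ) ^ 2 * x ^ (n + 2 - 1 - ℓ)) := by
    intro ℓ hℓ
    have hℓn : ℓ ≤ n + 1 := Nat.lt_succ_iff.1 (mem_range.1 hℓ)
    rw [show n + 2 - 1 - ℓ = n + 1 - ℓ by omega, ← exp_nat_mul, Nat.cast_sub hℓn,
      mul_left_comm, ← exp_add]
    push_cast
    ring_nf
  calc _ = exp (ε * (n + 1)) * ∑ k ∈ range (n + 2), (k : ℝ) ^ 2 * x ^ k := by
        rw [sum_congr rfl hterm, ← mul_sum, sum_range_reflect (fun k => (k : ℝ) ^ 2 * x ^ k)]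
    _ ≤ exp (ε * (n + 1)) * (x * (1 + x) / (1 - x) ^ 3) := by
        gcongr
        exact sum_range_sq_mul_pow_le (exp_nonneg _) (exp_neg_lt_one hε) _
    _ = _ := by
        rw [mul_div_assoc, ← mul_assoc, ← exp_add]
        ring_nf

lemma one_add_four_mul_sum_le {ε : ℝ} (hε : 0 < ε) {v : ℕ → ℝ} {A : ℝ} (hA : 1 ≤ A) {n : ℕ}
    (hv : ∀ ℓ ∈ Icc 1 (n - 1), v ℓ ≤ A * exp (ε * ℓ)) :
    1 + 4 * ∑ ℓ ∈ Icc 1 (n - 1), ((n : ℝ) + 1 - ℓ) ^ 2 * v ℓ ≤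
      (1 + 4 * exp (2 * ε) * (1 + exp (-ε)) / (1 - exp (-ε)) ^ 3) * (A * exp (ε * n)) := by
  set c := (1 + exp (-ε)) / (1 - exp (-ε)) ^ 3
  have hc : 0 ≤ c := div_nonneg (by positivity) (pow_nonneg (sub_pos.2 (exp_neg_lt_one hε)).le 3)
  have hS : ∑ ℓ ∈ Icc 1 (n - 1), ((n : ℝ) + 1 - ℓ) ^ 2 * v ℓ ≤ A * exp (ε * n) * c := calc
    _ ≤ ∑ ℓ ∈ Icc 1 (n - 1), A * (((n : ℝ) + 1 - ℓ) ^ 2 * exp (ε * ℓ)) :=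
        sum_le_sum fun ℓ hℓ => by rw [mul_left_comm]; gcongr; exact hv ℓ hℓ
    _ ≤ ∑ ℓ ∈ range (n + 2), A * (((n : ℝ) + 1 - ℓ) ^ 2 * exp (ε * ℓ)) :=
        sum_le_sum_of_subset_of_nonneg (fun ℓ hℓ => by simp at hℓ ⊢; omega)
          (fun _ _ _ => by positivity)
    _ ≤ A * (exp (ε * n) * c) := by
        rw [← mul_sum]; gcongr; exact sum_range_sq_mul_exp_le hε n
    _ = A * exp (ε * n) * c := by ring
  have hAe : 1 ≤ A * exp (ε * n) := one_le_mul_of_one_le_of_one_le hA (one_le_exp (by positivity))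
  have h2ε : 1 ≤ exp (2 * ε) := one_le_exp (by positivity)
  calc _ ≤ A * exp (ε * n) + 4 * (A * exp (ε * n) * c) := by gcongr
    _ ≤ A * exp (ε * n) + 4 * (A * exp (ε * n) * (exp (2 * ε) * c)) := by
        gcongr; exact le_mul_of_one_le_left hc h2ε
    _ = _ := by simp only [c]; ring

/-- Discrete Gronwall-type lemma: for every `ε > 0` there is `δ > 0` (one may take
`δ = (1 + 4e^{2ε}(1+e^{-ε})/(1-e^{-ε})³)⁻¹`) such that for any nonnegative `v : ℕ≥1 → [0,∞)`
with `V(n) := 1 + 4 Σ_{ℓ=1}^{n-1} (n+1-ℓ)² v(ℓ)` and any `A ≥ 1`, if for every `n ≥ 1` either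
`v(n) ≤ A e^{εn}` or `v(n) ≤ δ V(n)`, then `v(n) ≤ A e^{εn}` for every `n ≥ 1`. -/
theorem stmt_11 (ε : ℝ) (hε : 0 < ε) :
    ∃ δ : ℝ, 0 < δ ∧
      δ = (1 + 4 * Real.exp (2 * ε) * (1 + Real.exp (-ε)) / (1 - Real.exp (-ε)) ^ 3)⁻¹ ∧
      ∀ v : ℕ → ℝ, (∀ n, 1 ≤ n → 0 ≤ v n) →
        ∀ A : ℝ, 1 ≤ A →
          (∀ n, 1 ≤ n →
            v n ≤ A * Real.exp (ε * n) ∨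
              v n ≤ δ * (1 + 4 * ∑ ℓ ∈ Finset.Icc 1 (n - 1), ((n : ℝ) + 1 - (ℓ : ℝ)) ^ 2 * v ℓ)) →
          ∀ n, 1 ≤ n → v n ≤ A * Real.exp (ε * n) := by
  set D := 1 + 4 * exp (2 * ε) * (1 + exp (-ε)) / (1 - exp (-ε)) ^ 3
  have hD : 0 < D := add_pos_of_pos_of_nonneg one_pos
    (div_nonneg (by positivity) (pow_nonneg (sub_pos.2 (exp_neg_lt_one hε)).le 3))
  refine ⟨D⁻¹, inv_pos.2 hD, rfl, fun v _ A hA H n => ?_⟩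
  induction n using Nat.strong_induction_on with
  | _ n ih =>
    intro hn
    obtain h | h := H n hn
    · exact h
    have hprev : ∀ ℓ ∈ Icc 1 (n - 1), v ℓ ≤ A * exp (ε * ℓ) := fun ℓ hℓ => by
      rw [mem_Icc] at hℓ
      exact ih ℓ (by omega) hℓ.1
    calc v n ≤ D⁻¹ * (1 + 4 * ∑ ℓ ∈ Icc 1 (n - 1), ((n : ℝ) + 1 - ℓ) ^ 2 * v ℓ) := h
      _ ≤ D⁻¹ * (D * (A * exp (ε * n))) := by
          gcongr; exact one_add_four_mul_sum_le hε hA hprev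
      _ = A * exp (ε * n) := inv_mul_cancel_left₀ hD.ne' _
end

section
/- Let Γ be the free group on a finite set S, let F ⊆ Γ be a grounded set (a finite subset containing the identity that is connected in the left Cayley graph of (Γ, S)), let g be an element of the exterior boundary of F with g ∈ sF for s ∈ S ∪ S⁻¹ (so F ∪ {g} is the enlargement of F in direction s). If h, a, b ∈ F satisfy a⁻¹b = h⁻¹g, then h ∈ F ∩ sF. -/
/-
In the Cayley tree of a free group, a connected set meeting both sides of an edge contains both
endpoints of that edge. As `F` contains `s⁻¹g` but not `g`, all of `F` lies on the `s⁻¹g` side of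
the edge `{s⁻¹g, g}`: every reduced word `g x⁻¹` with `x ∈ F` begins with the letter `s`. Since
`h a⁻¹ = g b⁻¹`, the point `a ∈ F` therefore lies on the `s⁻¹h` side of the edge `{s⁻¹h, h}`,
while `h ∈ F` does not, so `s⁻¹h ∈ F`.
-/

/-- `s` is one of the free generators or an inverse of one: `s ∈ S ∪ S⁻¹`. -/
def IsFreeGenerator {α : Type*} (s : FreeGroup α) : Prop :=
  ∃ a : α, s = FreeGroup.of a ∨ s = (FreeGroup.of a)⁻¹

/-- A finite subset of the free group containing the identity and connected in the left Cayley
graph (edges `{x, tx}` for `t ∈ S ∪ S⁻¹`). -/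
def Grounded {α : Type*} (F : Set (FreeGroup α)) : Prop :=
  F.Finite ∧ (1 : FreeGroup α) ∈ F ∧
    ∀ g ∈ F,
      Relation.ReflTransGen
        (fun x y => y ∈ F ∧ ∃ a : α, y = FreeGroup.of a * x ∨ y = (FreeGroup.of a)⁻¹ * x) 1 g

namespace FreeGroup

variable {α : Type*}

theorem reduce_append_singleton [DecidableEq α] {L : List (α × Bool)} (hL : IsReduced L)
    (t : α × Bool) :
    reduce (L ++ [t]) = if L.getLast? = some (t.1, !t.2) then L.dropLast else L ++ [t] := by
  split_ifs with hlast
  · obtain ⟨L₀, rfl⟩ := List.getLast?_eq_some_iff.mp hlast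
    have hL₀ : IsReduced L₀ := hL.infix (List.prefix_append L₀ _).isInfix
    calc reduce (L₀ ++ [(t.1, !t.2)] ++ [t])
        = reduce (L₀ ++ (t.1, !t.2) :: (t.1, t.2) :: []) := by simp
      _ = reduce (L₀ ++ []) := reduce.Step.eq Red.Step.not_rev
      _ = (L₀ ++ [(t.1, !t.2)]).dropLast := by simp [hL₀.reduce_eq]
  · refine IsReduced.reduce_eq (List.isChain_append.mpr ⟨hL, List.isChain_singleton t, ?_⟩)
    intro x hx y hy
    obtain rfl : y = t := by simpa using hy.symm
    obtain ⟨x₁, x₂⟩ := x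
    obtain ⟨t₁, t₂⟩ := y
    cases x₂ <;> cases t₂ <;> simp_all

theorem eq_nil_of_head?_reduce_cons_append_singleton_ne [DecidableEq α] {σ t : α × Bool}
    {w : List (α × Bool)} (hw : IsReduced (σ :: w))
    (hhead : (reduce (σ :: w ++ [t])).head? ≠ some σ) : w = [] ∧ t = (σ.1, !σ.2) := by
  rw [reduce_append_singleton hw] at hhead
  split_ifs at hhead with hlast
  · cases w with
    | nil =>
      simp only [List.getLast?_singleton, Option.some.injEq] at hlast
      exact ⟨rfl, by simp [hlast]⟩
    | cons y w => simp [List.dropLast_cons_cons] at hhead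
  · simp at hhead

theorem inv_mk_singleton (t : α × Bool) : (mk [t])⁻¹ = mk [(t.1, !t.2)] := by
  simp [inv_mk, invRev]

/-- The component of the Cayley tree with the edge `{σ⁻¹c, c}` removed that contains `σ⁻¹c`:
the vertices `x` whose geodesic to `c` arrives through `σ⁻¹c`. -/
def halfTree [DecidableEq α] (c : FreeGroup α) (σ : α × Bool) : Set (FreeGroup α) :=
  {x | (c * x⁻¹).toWord.head? = some σ}

theorem eq_of_mem_halfTree_of_mul_notMem [DecidableEq α] {c x : FreeGroup α} {σ t : α × Bool}
    (hx : x ∈ halfTree c σ) (hy : mk [t] * x ∉ halfTree c σ) :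
    x = (mk [σ])⁻¹ * c ∧ mk [t] * x = c := by
  obtain ⟨w, hw⟩ := List.head?_eq_some_iff.mp hx
  have hword : (c * (mk [t] * x)⁻¹).toWord = reduce (σ :: w ++ [(t.1, !t.2)]) := by
    rw [mul_inv_rev, ← mul_assoc, toWord_mul, hw, inv_mk_singleton, toWord_mk, reduce_singleton]
  have hy' : (reduce (σ :: w ++ [(t.1, !t.2)])).head? ≠ some σ := hword ▸ hy
  obtain ⟨rfl, ht⟩ := eq_nil_of_head?_reduce_cons_append_singleton_ne (hw ▸ isReduced_toWord) hy'
  have hσ : c * x⁻¹ = mk [σ] := by rw [← mk_toWord (x := c * x⁻¹), hw]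
  obtain rfl : t = σ := by ext <;> simp_all
  constructor <;> rw [← hσ] <;> group

def StepIn (F : Set (FreeGroup α)) (x y : FreeGroup α) : Prop :=
  x ∈ F ∧ y ∈ F ∧ ∃ t : α × Bool, y = mk [t] * x

instance (F : Set (FreeGroup α)) : Std.Symm (StepIn F) where
  symm := by
    rintro x _ ⟨hx, hy, t, rfl⟩
    refine ⟨hy, hx, (t.1, !t.2), ?_⟩
    rw [← inv_mk_singleton, inv_mul_cancel_left]

theorem endpoints_mem_of_reflTransGen_stepIn [DecidableEq α] {F : Set (FreeGroup α)}
    {c u v : FreeGroup α} {σ : α × Bool} (huv : Relation.ReflTransGen (StepIn F) u v)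
    (hu : u ∈ halfTree c σ) (hv : v ∉ halfTree c σ) : c ∈ F ∧ (mk [σ])⁻¹ * c ∈ F := by
  induction huv with
  | refl => exact absurd hu hv
  | @tail x y _ hxy ih =>
    by_cases hx : x ∈ halfTree c σ
    · obtain ⟨hxF, hyF, t, rfl⟩ := hxy
      obtain ⟨hx_eq, hy_eq⟩ := eq_of_mem_halfTree_of_mul_notMem hx hv
      exact ⟨hy_eq ▸ hyF, hx_eq ▸ hxF⟩
    · exact ih hx

end FreeGroup

open FreeGroup

theorem IsFreeGenerator.exists_eq_mk {α : Type*} {s : FreeGroup α} (hs : IsFreeGenerator s) :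
    ∃ t : α × Bool, s = mk [t] := by
  obtain ⟨a, rfl | rfl⟩ := hs
  · exact ⟨(a, true), rfl⟩
  · exact ⟨(a, false), by simp [of, inv_mk, invRev]⟩

theorem Grounded.reflTransGen_stepIn {α : Type*} {F : Set (FreeGroup α)} (hF : Grounded F)
    {x y : FreeGroup α} (hx : x ∈ F) (hy : y ∈ F) : Relation.ReflTransGen (StepIn F) x y := by
  obtain ⟨-, hF₁, hF_conn⟩ := hF
  have reach_from_one : ∀ z ∈ F, Relation.ReflTransGen (StepIn F) 1 z := by
    intro z hz
    induction hF_conn z hz with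
    | refl => rfl
    | @tail m w hm hmw ih =>
      have hmF : m ∈ F := by
        rcases hm.cases_tail with rfl | ⟨_, _, hdm⟩
        exacts [hF₁, hdm.1]
      obtain ⟨a, hw | hw⟩ := hmw.2
      · obtain ⟨t, ht⟩ := IsFreeGenerator.exists_eq_mk ⟨a, Or.inl rfl⟩
        exact (ih hmF).tail ⟨hmF, hmw.1, t, ht ▸ hw⟩
      · obtain ⟨t, ht⟩ := IsFreeGenerator.exists_eq_mk ⟨a, Or.inr rfl⟩
        exact (ih hmF).tail ⟨hmF, hmw.1, t, ht ▸ hw⟩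
  exact (Std.Symm.symm _ _ (reach_from_one x hx)).trans (reach_from_one y hy)

theorem stmt_13_general {α : Type*} (F : Set (FreeGroup α)) (hF : Grounded F)
    (s g : FreeGroup α) (hs : IsFreeGenerator s) (hgF : g ∉ F) (hgs : s⁻¹ * g ∈ F)
    (h a b : FreeGroup α) (hh : h ∈ F) (ha : a ∈ F) (hb : b ∈ F)
    (heq : a⁻¹ * b = h⁻¹ * g) :
    h ∈ F ∩ (fun x => s * x) '' F := by
  classical
  obtain ⟨σ, rfl⟩ := hs.exists_eq_mk
  have hF_sub : F ⊆ halfTree g σ := by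
    intro x hx
    by_contra hxg
    have hgs_mem : (mk [σ])⁻¹ * g ∈ halfTree g σ := by
      simp [halfTree, toWord_mk]
    exact hgF (endpoints_mem_of_reflTransGen_stepIn (hF.reflTransGen_stepIn hgs hx) hgs_mem hxg).1
  have ha_mem : a ∈ halfTree h σ := by
    have hab : h * a⁻¹ = g * b⁻¹ := by
      calc h * a⁻¹ = h * (a⁻¹ * b) * b⁻¹ := by group
        _ = g * b⁻¹ := by rw [heq]; group
    simpa only [halfTree, Set.mem_ofPred_eq, hab] using hF_sub hb
  have hh_not : h ∉ halfTree h σ := by simp [halfTree]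
  have hσh := (endpoints_mem_of_reflTransGen_stepIn (hF.reflTransGen_stepIn ha hh) ha_mem hh_not).2
  exact ⟨hh, (mk [σ])⁻¹ * h, hσh, mul_inv_cancel_left _ _⟩

/-- If `F` is grounded, `g` is an exterior boundary point of `F` with `g ∈ sF`
(so `F ∪ {g}` is the enlargement of `F` in direction `s`), and `h, a, b ∈ F` satisfy
`a⁻¹ b = h⁻¹ g`, then `h ∈ F ∩ sF`. -/
theorem stmt_13 {α : Type*} [Fintype α] (F : Set (FreeGroup α)) (hF : Grounded F)
    (s g : FreeGroup α) (hs : IsFreeGenerator s) (hgF : g ∉ F) (hgs : s⁻¹ * g ∈ F)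
    (h a b : FreeGroup α) (hh : h ∈ F) (ha : a ∈ F) (hb : b ∈ F)
    (heq : a⁻¹ * b = h⁻¹ * g) :
    h ∈ F ∩ (fun x => s * x) '' F :=
  stmt_13_general F hF s g hs hgF hgs h a b hh ha hb heq
end

section
/- Let Γ be the free group on a finite set S and let F ⊆ Γ be a grounded set. Let F' = F ∪ {g} be an enlargement of F in direction s ∈ S ∪ S⁻¹. Then: F' ∩ sF' = (F ∩ sF) ∪ {g}; F' ∩ s⁻¹F' = (F ∩ s⁻¹F) ∪ {s⁻¹g}; and F' ∩ tF' = F ∩ tF for every t ∈ (S ∪ S⁻¹) \ {s, s⁻¹}. -/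
/-!
The Cayley graph of a free group is a tree, so a vertex `g` outside a connected set `F ∋ 1` has
at most one neighbour in `F`. Concretely, along a path from `1` inside `F` the reduced word of
`x * g⁻¹` never becomes empty and left multiplication by a generator only changes its front, so
its last letter stays that of `g⁻¹`; for a neighbour `t * g ∈ F` that last letter is `t` itself.
Hence `s⁻¹ * g` is the only neighbour of `g` in `F`. Expanding `(F ∪ {g}) ∩ t(F ∪ {g})` leaves,
besides `F ∩ tF`, only `{g} ∩ tF` and `F ∩ {t * g}`, which are nonempty exactly for `t = s` and
`t = s⁻¹` respectively.
-/

namespace IsFreeGenerator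

variable {α : Type*} {s : FreeGroup α}

theorem exists_eq_mk_s14 (hs : IsFreeGenerator s) : ∃ p : α × Bool, s = FreeGroup.mk [p] := by
  obtain ⟨a, rfl | rfl⟩ := hs
  · exact ⟨(a, true), rfl⟩
  · exact ⟨(a, false), by simp [FreeGroup.of, FreeGroup.inv_mk, FreeGroup.invRev]⟩

theorem inv (hs : IsFreeGenerator s) : IsFreeGenerator s⁻¹ := by
  obtain ⟨a, rfl | rfl⟩ := hs
  · exact ⟨a, Or.inr rfl⟩
  · exact ⟨a, Or.inl (inv_inv _)⟩

theorem ne_one (hs : IsFreeGenerator s) : s ≠ 1 := by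
  obtain ⟨a, rfl | rfl⟩ := hs
  · exact FreeGroup.of_ne_one a
  · exact inv_ne_one.mpr (FreeGroup.of_ne_one a)

theorem inv_ne_self (hs : IsFreeGenerator s) : s⁻¹ ≠ s := by
  classical
  obtain ⟨p, rfl⟩ := hs.exists_eq_mk_s14
  intro h
  have := congrArg FreeGroup.toWord h
  simp only [FreeGroup.inv_mk, FreeGroup.invRev, FreeGroup.toWord_mk, FreeGroup.reduce_singleton,
    List.map_singleton, List.reverse_singleton, List.cons.injEq, and_true] at this
  exact Bool.not_ne_self _ (congrArg Prod.snd this)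

theorem getLast?_toWord_mul [DecidableEq α] (hs : IsFreeGenerator s) {u : FreeGroup α}
    (hu : u ≠ 1) (hsu : s * u ≠ 1) : (s * u).toWord.getLast? = u.toWord.getLast? := by
  obtain ⟨p, rfl⟩ := hs.exists_eq_mk_s14
  have hword : (FreeGroup.mk [p] * u).toWord = FreeGroup.reduce (p :: u.toWord) := by
    rw [FreeGroup.toWord_mul, FreeGroup.toWord_mk, FreeGroup.reduce_singleton,
      List.singleton_append]
  rw [Ne, ← FreeGroup.toWord_eq_nil_iff] at hu hsu
  obtain ⟨c, tl, hc⟩ := List.exists_cons_of_ne_nil hu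
  rw [hword, FreeGroup.reduce.cons, FreeGroup.reduce_toWord, hc] at hsu ⊢
  dsimp only at hsu ⊢
  split_ifs at hsu ⊢
  · obtain ⟨d, tl', rfl⟩ := List.exists_cons_of_ne_nil hsu
    simp
  · simp

end IsFreeGenerator

theorem union_singleton_inter_image_mul_left {G : Type*} [Group G] (F : Set G) {g t : G}
    (ht : t ≠ 1) :
    (F ∪ {g}) ∩ (t * ·) '' (F ∪ {g}) = F ∩ (t * ·) '' F ∪ {g} ∩ (t * ·) '' F ∪ F ∩ {t * g} := by
  have hdisj : ({g} : Set G) ∩ {t * g} = ∅ :=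
    Set.singleton_inter_eq_empty.mpr fun h => ht (by simpa using h)
  rw [Set.image_union, Set.image_singleton, Set.union_inter_distrib_right,
    Set.inter_union_distrib_left, Set.inter_union_distrib_left, hdisj, Set.union_empty]
  ac_rfl

namespace Grounded

variable {α : Type*} {F : Set (FreeGroup α)} {g : FreeGroup α}

theorem getLast?_toWord_mul_inv [DecidableEq α] (hF : Grounded F) (hg : g ∉ F) {x : FreeGroup α}
    (hx : x ∈ F) : (x * g⁻¹).toWord.getLast? = g⁻¹.toWord.getLast? := by
  obtain ⟨-, hone, hconn⟩ := hF
  induction hconn x hx with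
  | refl => rw [one_mul]
  | @tail y z hpath hstep ih =>
    have hy : y ∈ F := by
      rcases hpath.cases_tail with rfl | ⟨_, -, hy, -⟩
      exacts [hone, hy]
    obtain ⟨hz, a, hza⟩ := hstep
    obtain ⟨t, ht, rfl⟩ : ∃ t, IsFreeGenerator t ∧ z = t * y := by
      rcases hza with h | h
      exacts [⟨_, ⟨a, Or.inl rfl⟩, h⟩, ⟨_, ⟨a, Or.inr rfl⟩, h⟩]
    have hyg : y * g⁻¹ ≠ 1 := mul_inv_eq_one.not.mpr (ne_of_mem_of_not_mem hy hg)
    have htyg : t * (y * g⁻¹) ≠ 1 := by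
      rw [← mul_assoc]
      exact mul_inv_eq_one.not.mpr (ne_of_mem_of_not_mem hz hg)
    rw [mul_assoc, ht.getLast?_toWord_mul hyg htyg, ih hy]

theorem eq_of_mul_mem (hF : Grounded F) (hg : g ∉ F) {t u : FreeGroup α} (ht : IsFreeGenerator t)
    (hu : IsFreeGenerator u) (htg : t * g ∈ F) (hug : u * g ∈ F) : t = u := by
  classical
  obtain ⟨p, rfl⟩ := ht.exists_eq_mk_s14
  obtain ⟨q, rfl⟩ := hu.exists_eq_mk_s14
  have hp := hF.getLast?_toWord_mul_inv hg htg
  have hq := hF.getLast?_toWord_mul_inv hg hug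
  simp only [mul_inv_cancel_right, FreeGroup.toWord_mk, FreeGroup.reduce_singleton,
    List.getLast?_singleton] at hp hq
  rw [Option.some_injective _ (hp.trans hq.symm)]

end Grounded

theorem stmt_14_general {α : Type*} (F : Set (FreeGroup α)) (hF : Grounded F)
    (s g : FreeGroup α) (hs : IsFreeGenerator s) (hgF : g ∉ F) (hgs : s⁻¹ * g ∈ F) :
    ((F ∪ {g}) ∩ (fun x => s * x) '' (F ∪ {g}) = (F ∩ (fun x => s * x) '' F) ∪ {g}) ∧
      ((F ∪ {g}) ∩ (fun x => s⁻¹ * x) '' (F ∪ {g}) =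
        (F ∩ (fun x => s⁻¹ * x) '' F) ∪ {s⁻¹ * g}) ∧
      ∀ t : FreeGroup α, IsFreeGenerator t → t ≠ s → t ≠ s⁻¹ →
        (F ∪ {g}) ∩ (fun x => t * x) '' (F ∪ {g}) = F ∩ (fun x => t * x) '' F := by
  have hneighbor {t : FreeGroup α} (ht : IsFreeGenerator t) (htg : t * g ∈ F) : t = s⁻¹ :=
    hF.eq_of_mul_mem hgF ht hs.inv htg hgs
  have hg_image {t : FreeGroup α} : g ∈ (t * ·) '' F ↔ t⁻¹ * g ∈ F := by
    rw [Set.image_mul_left]; rfl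
  have hsg : s * g ∉ F := fun h => hs.inv_ne_self (hneighbor hs h).symm
  refine ⟨?_, ?_, fun t ht hts htsi => ?_⟩
  · rw [union_singleton_inter_image_mul_left F hs.ne_one,
      Set.singleton_inter_of_mem (hg_image.mpr hgs), Set.inter_singleton_eq_empty.mpr hsg,
      Set.union_empty]
  · rw [union_singleton_inter_image_mul_left F hs.inv.ne_one,
      Set.singleton_inter_eq_empty.mpr (by rwa [hg_image, inv_inv]), Set.union_empty,
      Set.inter_singleton_of_mem hgs]
  · have htg : t * g ∉ F := fun h => htsi (hneighbor ht h)
    have htig : t⁻¹ * g ∉ F := fun h => hts (inv_inj.mp (hneighbor ht.inv h))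
    rw [union_singleton_inter_image_mul_left F ht.ne_one,
      Set.singleton_inter_eq_empty.mpr (hg_image.not.mpr htig),
      Set.inter_singleton_eq_empty.mpr htg, Set.union_empty, Set.union_empty]

/-- For a grounded set `F` and an enlargement `F' = F ∪ {g}` in direction `s`:
`F' ∩ sF' = (F ∩ sF) ∪ {g}`, `F' ∩ s⁻¹F' = (F ∩ s⁻¹F) ∪ {s⁻¹g}`, and
`F' ∩ tF' = F ∩ tF` for `t ∈ (S ∪ S⁻¹) \ {s, s⁻¹}`. -/
theorem stmt_14 {α : Type*} [Fintype α] (F : Set (FreeGroup α)) (hF : Grounded F)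
    (s g : FreeGroup α) (hs : IsFreeGenerator s) (hgF : g ∉ F) (hgs : s⁻¹ * g ∈ F) :
    ((F ∪ {g}) ∩ (fun x => s * x) '' (F ∪ {g}) = (F ∩ (fun x => s * x) '' F) ∪ {g}) ∧
      ((F ∪ {g}) ∩ (fun x => s⁻¹ * x) '' (F ∪ {g}) =
        (F ∩ (fun x => s⁻¹ * x) '' F) ∪ {s⁻¹ * g}) ∧
      ∀ t : FreeGroup α, IsFreeGenerator t → t ≠ s → t ≠ s⁻¹ →
        (F ∪ {g}) ∩ (fun x => t * x) '' (F ∪ {g}) = F ∩ (fun x => t * x) '' F :=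
  stmt_14_general F hF s g hs hgF hgs
end

section
/- Let Γ be the free group of finite rank r ≥ 1 with free generating set S, |S| = r, and let B_n be the closed ball of radius n about the identity in the word metric. Then for every n ≥ 1, |B_n| − Σ_{s ∈ S} |B_n ∩ sB_n| = 1. -/
/-!
Every nontrivial `g ∈ B_n` has a leading generator `a ∈ S` (its reduced word starts with `a` or
`a⁻¹`), so `|B_n| = 1 + Σ_a |{g ∈ B_n : g leads with a}|`. For each `a`, the set
`B_n ∩ aB_n = {h : |h| ≤ n, |a⁻¹h| ≤ n}` is in bijection with the fibre over `a`: keep `h` if its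
reduced word starts with `a`, and otherwise replace it by `a⁻¹h`, whose reduced word is `a⁻¹`
followed by that of `h`.
-/

open FreeGroup

namespace FreeGroup

variable {α : Type*}

theorem head?_ne_of_isReduced_cons {a : α} {b : Bool} {L : List (α × Bool)}
    (h : IsReduced ((a, b) :: L)) : L.head? ≠ some (a, !b) := by
  rcases L with _ | ⟨y, L⟩
  · simp
  · rintro ⟨⟩
    simpa using (isReduced_cons_cons.mp h).1 rfl

variable [DecidableEq α]

theorem toWord_mk_singleton_mul {x : α × Bool} {g : FreeGroup α}
    (h : IsReduced (x :: g.toWord)) : (mk [x] * g).toWord = x :: g.toWord := by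
  rw [toWord_mul, toWord_mk, reduce_singleton, List.singleton_append, h.reduce_eq]

theorem toWord_mk_singleton_mul_of_toWord_eq_cons {a : α} {b : Bool} {g : FreeGroup α}
    {L : List (α × Bool)} (h : g.toWord = (a, b) :: L) : (mk [(a, !b)] * g).toWord = L := by
  have hL : IsReduced L := (h ▸ isReduced_toWord (x := g)).tail
  rw [toWord_mul, toWord_mk, reduce_singleton, h, List.singleton_append,
    reduce.Step.eq Red.Step.cons_not_rev, hL.reduce_eq]

theorem toWord_inv_of_mul_of_head?_ne {a : α} {g : FreeGroup α}
    (h : g.toWord.head? ≠ some (a, true)) : ((of a)⁻¹ * g).toWord = (a, false) :: g.toWord := by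
  refine toWord_mk_singleton_mul ?_
  rcases hg : g.toWord with _ | ⟨⟨c, b⟩, L⟩
  · exact IsReduced.singleton
  · refine isReduced_cons_cons.mpr ⟨?_, hg ▸ isReduced_toWord⟩
    rintro rfl
    cases b
    · rfl
    · simp [hg] at h

theorem toWord_of_mul_of_toWord_eq_cons {a : α} {g : FreeGroup α} {L : List (α × Bool)}
    (h : g.toWord = (a, false) :: L) : (of a * g).toWord = L :=
  toWord_mk_singleton_mul_of_toWord_eq_cons h

theorem toWord_inv_of_mul_of_toWord_eq_cons {a : α} {g : FreeGroup α} {L : List (α × Bool)}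
    (h : g.toWord = (a, true) :: L) : ((of a)⁻¹ * g).toWord = L :=
  toWord_mk_singleton_mul_of_toWord_eq_cons h

def leadingGen (g : FreeGroup α) : Option α :=
  g.toWord.head?.map Prod.fst

theorem leadingGen_eq_none_iff {g : FreeGroup α} : leadingGen g = none ↔ g = 1 := by
  simp [leadingGen, toWord_eq_nil_iff]

theorem leadingGen_eq_some_iff {g : FreeGroup α} {a : α} :
    leadingGen g = some a ↔ ∃ b L, g.toWord = (a, b) :: L := by
  rcases hg : g.toWord with _ | ⟨⟨c, b⟩, L⟩ <;> simp [leadingGen, hg]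

variable (α) in
def wordBall (n : ℕ) : Set (FreeGroup α) :=
  {g | norm g ≤ n}

theorem finite_wordBall [Finite α] (n : ℕ) : (wordBall α n).Finite :=
  ((List.finite_length_le _ n).preimage toWord_injective.injOn).subset fun _ hg => hg

def foldAt (a : α) (h : FreeGroup α) : FreeGroup α :=
  if h.toWord.head? = some (a, true) then h else (of a)⁻¹ * h

def unfoldAt (a : α) (g : FreeGroup α) : FreeGroup α :=
  if g.toWord.head? = some (a, true) then g else of a * g

theorem leadingGen_foldAt (a : α) (h : FreeGroup α) : leadingGen (foldAt a h) = some a := by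
  unfold foldAt
  split_ifs with hh
  · simp [leadingGen, hh]
  · simp [leadingGen, toWord_inv_of_mul_of_head?_ne hh]

theorem unfoldAt_foldAt (a : α) (h : FreeGroup α) : unfoldAt a (foldAt a h) = h := by
  unfold foldAt
  split_ifs with hh
  · simp [unfoldAt, hh]
  · simp [unfoldAt, toWord_inv_of_mul_of_head?_ne hh]

theorem foldAt_unfoldAt {a : α} {g : FreeGroup α} (hg : leadingGen g = some a) :
    foldAt a (unfoldAt a g) = g := by
  obtain ⟨b, L, hL⟩ := leadingGen_eq_some_iff.mp hg
  cases b
  · have hL' := toWord_of_mul_of_toWord_eq_cons hL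
    have := head?_ne_of_isReduced_cons (hL ▸ isReduced_toWord (x := g))
    simp_all [unfoldAt, foldAt]
  · simp [unfoldAt, foldAt, hL]

theorem norm_foldAt_le {n : ℕ} {a : α} {h : FreeGroup α} (hh : norm h ≤ n)
    (hh' : norm ((of a)⁻¹ * h) ≤ n) : norm (foldAt a h) ≤ n := by
  unfold foldAt
  split_ifs <;> assumption

theorem norm_unfoldAt_le {n : ℕ} {a : α} {g : FreeGroup α} (hg : leadingGen g = some a)
    (hn : norm g ≤ n) : norm (unfoldAt a g) ≤ n ∧ norm ((of a)⁻¹ * unfoldAt a g) ≤ n := by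
  obtain ⟨b, L, hL⟩ := leadingGen_eq_some_iff.mp hg
  have hgL : norm g = L.length + 1 := by simp [norm, hL]
  cases b
  · have hL' : norm (of a * g) = L.length := by simp [norm, toWord_of_mul_of_toWord_eq_cons hL]
    rw [unfoldAt, if_neg (by simp [hL]), inv_mul_cancel_left]
    omega
  · have hL' : norm ((of a)⁻¹ * g) = L.length := by
      simp [norm, toWord_inv_of_mul_of_toWord_eq_cons hL]
    rw [unfoldAt, if_pos (by simp [hL])]
    omega

def wordBallInterTranslateEquiv (n : ℕ) (a : α) :
    ↥(wordBall α n ∩ ((of a)⁻¹ * ·) ⁻¹' wordBall α n) ≃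
      {g : wordBall α n // leadingGen g.1 = some a} where
  toFun h := ⟨⟨foldAt a h, norm_foldAt_le h.2.1 h.2.2⟩, leadingGen_foldAt a h⟩
  invFun g := ⟨unfoldAt a g, norm_unfoldAt_le g.2 g.1.2⟩
  left_inv h := Subtype.ext (unfoldAt_foldAt a h)
  right_inv g := Subtype.ext (Subtype.ext (foldAt_unfoldAt g.2))

theorem card_wordBall_eq_one_add_sum [Fintype α] (n : ℕ) :
    Nat.card (wordBall α n) =
      1 + ∑ a : α, Nat.card {g : wordBall α n // leadingGen g.1 = some a} := by
  have := (finite_wordBall (α := α) n).to_subtype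
  have hone : Nat.card {g : wordBall α n // leadingGen g.1 = none} = 1 := by
    refine Nat.card_eq_one_iff_exists.mpr ⟨⟨⟨1, by simp [wordBall]⟩, rfl⟩, fun g => ?_⟩
    exact Subtype.ext (Subtype.ext (leadingGen_eq_none_iff.mp g.2))
  rw [← Nat.card_congr (Equiv.sigmaFiberEquiv fun g : wordBall α n => leadingGen g.1),
    Nat.card_sigma, Fintype.sum_option, hone]

end FreeGroup

theorem stmt_15_general {α : Type*} [Fintype α] [DecidableEq α] (n : ℕ) :
    (Nat.card {g : FreeGroup α | FreeGroup.norm g ≤ n} : ℤ) -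
        ∑ a : α,
          (Nat.card ↥({g : FreeGroup α | FreeGroup.norm g ≤ n} ∩
            (fun g => FreeGroup.of a * g) '' {g : FreeGroup α | FreeGroup.norm g ≤ n}) : ℤ) =
      1 := by
  simp only [Set.image_mul_left]
  rw [← wordBall, card_wordBall_eq_one_add_sum n]
  simp only [Nat.card_congr (wordBallInterTranslateEquiv n _)]
  push_cast
  ring

/-- For the free group of finite rank `r ≥ 1` with free generating set `S` and balls `B_n` in the
word metric: `|B_n| - Σ_{s ∈ S} |B_n ∩ s B_n| = 1` for every `n ≥ 1`. -/
theorem stmt_15 {α : Type*} [Fintype α] [DecidableEq α] [Nonempty α] (n : ℕ) (hn : 1 ≤ n) :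
    (Nat.card {g : FreeGroup α | FreeGroup.norm g ≤ n} : ℤ) -
        ∑ a : α,
          (Nat.card ↥({g : FreeGroup α | FreeGroup.norm g ≤ n} ∩
            (fun g => FreeGroup.of a * g) '' {g : FreeGroup α | FreeGroup.norm g ≤ n}) : ℤ) =
      1 :=
  stmt_15_general n
end

section
/- Let Γ be the free group on a finite set S, and for g ∈ Γ let |g| be its reduced word length. Let a, b : Γ → ℂ be finitely supported functions with a supported on the sphere S_n = {|g| = n} and b supported on S_m. Then for any k with |n−m| ≤ k ≤ n+m and k ≡ n+m (mod 2), the restriction of the convolution a*b to S_k satisfies ‖(a*b)·1_{S_k}‖_{ℓ²} ≤ ‖a‖_{ℓ²}·‖b‖_{ℓ²}; and for every other k, (a*b)·1_{S_k} = 0. -/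
/-!
Put `c = (n + k - m) / 2`. If `a h ≠ 0`, `b (h⁻¹ g) ≠ 0` and `|g| = k`, then exactly `c` letters
cancel in the reduced product `h⁻¹ g`, so `h` begins with the first `c` letters of `g` and `h⁻¹ g`
ends with the last `k - c` letters of `g`. By Cauchy–Schwarz, `|(a * b)(g)|²` is at most the product
of the ℓ²-mass of `a` on the words with that prefix and the ℓ²-mass of `b` on the words with that
suffix. As `g ∈ S_k` is determined by its prefix and suffix, summing over `S_k` gives at most
`‖a‖² ‖b‖²`. The same cancellation count `|h⁻¹ g| + 2c = |h| + |g|` gives the triangle and parity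
constraints on `k`.
-/

open scoped BigOperators

/-- Convolution of two (finitely supported) functions on the free group:
`(a * b)(g) = Σ_h a(h) b(h⁻¹ g)`. -/
noncomputable def convol {α : Type*} (a b : FreeGroup α → ℂ) : FreeGroup α → ℂ :=
  fun g => ∑ᶠ h : FreeGroup α, a h * b (h⁻¹ * g)

/-- The `ℓ²` norm of the restriction of `a` to the set `T`. -/
noncomputable def l2normOn {α : Type*} (a : FreeGroup α → ℂ) (T : Set (FreeGroup α)) : ℝ :=
  Real.sqrt (∑ᶠ g ∈ T, ‖a g‖ ^ 2)

theorem List.take_append_rtake_length_sub {β : Type*} (l : List β) (c : ℕ) :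
    l.take c ++ l.rtake (l.length - c) = l := by
  rw [List.rtake, Nat.sub_sub_eq_min, Nat.min_comm, List.take_eq_take_min, List.take_append_drop]

namespace FreeGroup

variable {α : Type*} [DecidableEq α] {L : List (α × Bool)}

theorem IsReduced.invRev (h : IsReduced L) : IsReduced (invRev L) := by
  rw [isReduced_iff_reduce_eq, reduce_invRev, h.reduce_eq]

theorem reduce_invRev_append :
    ∀ {u v : List (α × Bool)}, IsReduced u → IsReduced v →
      ∃ c ≤ u.length, c ≤ v.length ∧ u.take c = v.take c ∧
        reduce (invRev u ++ v) = invRev (u.drop c) ++ v.drop c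
  | [], v, _, hv => ⟨0, by simp [hv.reduce_eq]⟩
  | x :: u, [], hu, _ => ⟨0, by simp [reduce_invRev, hu.reduce_eq]⟩
  | x :: u, y :: v, hu, hv => by
    by_cases hxy : x = y
    · subst hxy
      obtain ⟨c, hcu, hcv, htake, hred⟩ :=
        reduce_invRev_append (hu.infix (List.suffix_cons x u).isInfix)
          (hv.infix (List.suffix_cons x v).isInfix)
      refine ⟨c + 1, by simpa using hcu, by simpa using hcv, by simp [htake], ?_⟩
      have hstep : Red.Step (invRev u ++ (x.1, !x.2) :: (x.1, !(!x.2)) :: v) (invRev u ++ v) :=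
        Red.Step.not
      rw [← reduce.Step.eq hstep] at hred
      simpa [invRev, List.append_assoc] using hred
    · refine ⟨0, by simp, by simp, by simp, ?_⟩
      refine IsReduced.reduce_eq (List.isChain_append.mpr ⟨hu.invRev, hv, ?_⟩)
      simp only [invRev, List.map_cons, List.reverse_cons, List.getLast?_append,
        List.getLast?_singleton, Option.some_or, Option.mem_def, Option.some.injEq, List.head?_cons]
      rintro _ rfl _ rfl h1
      exact Bool.not_eq.mpr (fun h2 => hxy (Prod.ext h1 h2))

theorem toWord_inv_mul (x y : FreeGroup α) :
    ∃ c ≤ norm x, c ≤ norm y ∧ x.toWord.take c = y.toWord.take c ∧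
      (x⁻¹ * y).toWord = invRev (x.toWord.drop c) ++ y.toWord.drop c := by
  obtain ⟨c, hcx, hcy, htake, hred⟩ :=
    reduce_invRev_append (isReduced_toWord (x := x)) (isReduced_toWord (x := y))
  refine ⟨c, hcx, hcy, htake, ?_⟩
  rw [← hred, ← toWord_mk, ← mul_mk, ← inv_mk, mk_toWord, mk_toWord]

theorem exists_norm_inv_mul_add_two_mul (x y : FreeGroup α) :
    ∃ c ≤ norm x, c ≤ norm y ∧ norm (x⁻¹ * y) + 2 * c = norm x + norm y := by
  obtain ⟨c, hcx, hcy, -, hword⟩ := toWord_inv_mul x y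
  refine ⟨c, hcx, hcy, ?_⟩
  simp only [norm, hword, List.length_append, invRev_length, List.length_drop] at hcx hcy ⊢
  omega

theorem take_eq_and_rtake_eq_of_norm_inv_mul {x y : FreeGroup α} {c : ℕ}
    (hc : norm (x⁻¹ * y) + 2 * c = norm x + norm y) :
    x.toWord.take c = y.toWord.take c ∧
      (x⁻¹ * y).toWord.rtake (norm y - c) = y.toWord.rtake (norm y - c) := by
  obtain ⟨c', hcx, hcy, htake, hword⟩ := toWord_inv_mul x y
  have hlen : norm (x⁻¹ * y) = norm x - c' + (norm y - c') := by simp [norm, hword]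
  obtain rfl : c = c' := by omega
  refine ⟨htake, ?_⟩
  have hsuffix : norm y - c = (y.toWord.drop c).length := by simp [norm]
  rw [hsuffix, hword, List.rtake, List.length_append, Nat.add_sub_cancel, List.drop_left,
    List.rtake, List.length_drop, Nat.sub_sub_self (show c ≤ y.toWord.length from hcy)]

theorem finite_setOf_norm_eq [Finite α] (k : ℕ) : {x : FreeGroup α | norm x = k}.Finite :=
  (List.finite_length_eq (α × Bool) k).preimage toWord_injective.injOn

noncomputable def sphere [Finite α] (k : ℕ) : Finset (FreeGroup α) :=
  (finite_setOf_norm_eq k).toFinset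

@[simp]
theorem mem_sphere [Finite α] {k : ℕ} {x : FreeGroup α} : x ∈ sphere k ↔ norm x = k :=
  Set.Finite.mem_toFinset _

theorem coe_sphere [Finite α] (k : ℕ) :
    ((sphere k : Finset (FreeGroup α)) : Set (FreeGroup α)) = {x | norm x = k} :=
  Set.Finite.coe_toFinset _

end FreeGroup

section FiberedConvolution

open Finset

variable {R : Type*} [SeminormedRing R]

theorem norm_sum_mul_sq_le {ι : Type*} (s : Finset ι) (f g : ι → R) :
    ‖∑ i ∈ s, f i * g i‖ ^ 2 ≤ (∑ i ∈ s, ‖f i‖ ^ 2) * ∑ i ∈ s, ‖g i‖ ^ 2 :=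
  calc ‖∑ i ∈ s, f i * g i‖ ^ 2 ≤ (∑ i ∈ s, ‖f i‖ * ‖g i‖) ^ 2 := by
        gcongr
        exact (norm_sum_le _ _).trans (sum_le_sum fun i _ => norm_mul_le _ _)
    _ ≤ _ := sum_mul_sq_le_sq_mul_sq s _ _

theorem sum_mul_le_sum_image_mul_sum_image {ι Y Z : Type*} [DecidableEq Y] [DecidableEq Z]
    {s : Finset ι} {p : ι → Y} {q : ι → Z} (hpq : Set.InjOn (fun i => (p i, q i)) s)
    {φ : Y → ℝ} {ψ : Z → ℝ} (hφ : ∀ y, 0 ≤ φ y) (hψ : ∀ z, 0 ≤ ψ z) :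
    ∑ i ∈ s, φ (p i) * ψ (q i) ≤ (∑ y ∈ s.image p, φ y) * ∑ z ∈ s.image q, ψ z := by
  rw [sum_mul_sum, ← sum_product']
  calc ∑ i ∈ s, φ (p i) * ψ (q i) = ∑ x ∈ s.image (fun i => (p i, q i)), φ x.1 * ψ x.2 :=
        (sum_image (f := fun x => φ x.1 * ψ x.2) hpq).symm
    _ ≤ _ := by
        refine sum_le_sum_of_subset_of_nonneg ?_ fun x _ _ => mul_nonneg (hφ _) (hψ _)
        intro x hx
        obtain ⟨i, hi, rfl⟩ := mem_image.1 hx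
        exact mem_product.2 ⟨mem_image_of_mem p hi, mem_image_of_mem q hi⟩

variable {G Y Z : Type*} [Group G] [DecidableEq G] [DecidableEq Y] [DecidableEq Z]

theorem norm_sum_mul_sq_le_of_fibers {a b : G → R} {s t : Finset G} (hb : ∀ x ∉ t, b x = 0)
    {p : G → Y} {q : G → Z} {g : G} {y : Y} {z : Z}
    (hpq : ∀ h, a h ≠ 0 → b (h⁻¹ * g) ≠ 0 → p h = y ∧ q (h⁻¹ * g) = z) :
    ‖∑ h ∈ s, a h * b (h⁻¹ * g)‖ ^ 2 ≤
      (∑ h ∈ s with p h = y, ‖a h‖ ^ 2) * ∑ x ∈ t with q x = z, ‖b x‖ ^ 2 := by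
  set s' := s.filter fun h => p h = y ∧ h⁻¹ * g ∈ t ∧ q (h⁻¹ * g) = z
  have hs' : ∑ h ∈ s', a h * b (h⁻¹ * g) = ∑ h ∈ s, a h * b (h⁻¹ * g) := by
    refine sum_filter_of_ne fun h _ hne => ?_
    have hbh : b (h⁻¹ * g) ≠ 0 := right_ne_zero_of_mul hne
    obtain ⟨hp, hq⟩ := hpq h (left_ne_zero_of_mul hne) hbh
    exact ⟨hp, by_contra fun ht => hbh (hb _ ht), hq⟩
  have hinj : Set.InjOn (fun h => h⁻¹ * g) s' := fun _ _ _ _ e =>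
    inv_injective (mul_right_cancel e)
  calc ‖∑ h ∈ s, a h * b (h⁻¹ * g)‖ ^ 2
      ≤ (∑ h ∈ s', ‖a h‖ ^ 2) * ∑ h ∈ s', ‖b (h⁻¹ * g)‖ ^ 2 := hs' ▸ norm_sum_mul_sq_le _ _ _
    _ = (∑ h ∈ s', ‖a h‖ ^ 2) * ∑ x ∈ s'.image (fun h => h⁻¹ * g), ‖b x‖ ^ 2 := by
        rw [sum_image hinj]
    _ ≤ _ := by
        gcongr
        · exact monotone_filter_right s fun _ _ hh => hh.1
        · intro x hx
          obtain ⟨h, hh, rfl⟩ := mem_image.1 hx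
          obtain ⟨-, -, ht, hq⟩ := mem_filter.1 hh
          exact mem_filter.2 ⟨ht, hq⟩

theorem sum_norm_sum_mul_sq_le_of_fibers {a b : G → R} {s t T : Finset G}
    (hb : ∀ x ∉ t, b x = 0) {p : G → Y} {q : G → Z} (hT : Set.InjOn (fun g => (p g, q g)) T)
    (hpq : ∀ g ∈ T, ∀ h, a h ≠ 0 → b (h⁻¹ * g) ≠ 0 → p h = p g ∧ q (h⁻¹ * g) = q g) :
    ∑ g ∈ T, ‖∑ h ∈ s, a h * b (h⁻¹ * g)‖ ^ 2 ≤ (∑ h ∈ s, ‖a h‖ ^ 2) * ∑ x ∈ t, ‖b x‖ ^ 2 :=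
  calc ∑ g ∈ T, ‖∑ h ∈ s, a h * b (h⁻¹ * g)‖ ^ 2
      ≤ ∑ g ∈ T, (∑ h ∈ s with p h = p g, ‖a h‖ ^ 2) * ∑ x ∈ t with q x = q g, ‖b x‖ ^ 2 :=
        sum_le_sum fun g hg => norm_sum_mul_sq_le_of_fibers hb (hpq g hg)
    _ ≤ (∑ y ∈ T.image p, ∑ h ∈ s with p h = y, ‖a h‖ ^ 2) *
          ∑ z ∈ T.image q, ∑ x ∈ t with q x = z, ‖b x‖ ^ 2 :=
        sum_mul_le_sum_image_mul_sum_image (φ := fun y => ∑ h ∈ s with p h = y, ‖a h‖ ^ 2)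
          (ψ := fun z => ∑ x ∈ t with q x = z, ‖b x‖ ^ 2) hT (fun _ => by positivity)
          fun _ => by positivity
    _ ≤ _ := by
        gcongr
        · exact sum_fiberwise_le_sum_of_sum_fiber_nonneg fun _ _ => by positivity
        · exact sum_fiberwise_le_sum_of_sum_fiber_nonneg fun _ _ => by positivity

end FiberedConvolution

namespace FreeGroup

variable {α : Type*}

theorem convol_eq_sum {a : FreeGroup α → ℂ} {s : Finset (FreeGroup α)} (ha : ∀ x ∉ s, a x = 0)
    (b : FreeGroup α → ℂ) (g : FreeGroup α) : convol a b g = ∑ h ∈ s, a h * b (h⁻¹ * g) :=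
  finsum_eq_sum_of_support_subset _ fun h hh =>
    by_contra fun hs => hh (by simp [ha h hs])

theorem exists_ne_zero_of_convol_ne_zero {a b : FreeGroup α → ℂ} {g : FreeGroup α}
    (hg : convol a b g ≠ 0) : ∃ h, a h ≠ 0 ∧ b (h⁻¹ * g) ≠ 0 := by
  by_contra! hab
  exact hg (finsum_eq_zero_of_forall_eq_zero fun h => by
    by_cases hah : a h = 0 <;> simp [hah, hab h])

theorem l2normOn_coe_finset (a : FreeGroup α → ℂ) (s : Finset (FreeGroup α)) :
    l2normOn a s = √(∑ x ∈ s, ‖a x‖ ^ 2) := by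
  rw [l2normOn, finsum_mem_coe_finset]

theorem l2normOn_univ_eq {a : FreeGroup α → ℂ} {s : Finset (FreeGroup α)}
    (ha : ∀ x ∉ s, a x = 0) : l2normOn a Set.univ = √(∑ x ∈ s, ‖a x‖ ^ 2) := by
  rw [l2normOn, finsum_mem_univ, finsum_eq_sum_of_support_subset]
  exact fun x hx => by_contra fun hs => hx (by simp [ha x hs])

variable [DecidableEq α]

theorem triangle_parity_of_convol_ne_zero {n m : ℕ} {a b : FreeGroup α → ℂ}
    (ha : ∀ g, a g ≠ 0 → norm g = n) (hb : ∀ g, b g ≠ 0 → norm g = m) {g : FreeGroup α}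
    (hg : convol a b g ≠ 0) :
    n ≤ m + norm g ∧ m ≤ n + norm g ∧ norm g ≤ n + m ∧ (n + m) % 2 = norm g % 2 := by
  obtain ⟨h, hah, hbh⟩ := exists_ne_zero_of_convol_ne_zero hg
  obtain ⟨c, hch, hcg, hc⟩ := exists_norm_inv_mul_add_two_mul h g
  rw [ha h hah] at hch hc
  rw [hb _ hbh] at hc
  omega

theorem injOn_take_rtake_toWord (c k : ℕ) :
    Set.InjOn (fun x : FreeGroup α => (x.toWord.take c, x.toWord.rtake (k - c)))
      {x | norm x = k} := by
  intro x (hx : x.toWord.length = k) y (hy : y.toWord.length = k) hxy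
  obtain ⟨htake, hrtake⟩ := Prod.mk.inj hxy
  apply toWord_injective
  rw [← x.toWord.take_append_rtake_length_sub c, ← y.toWord.take_append_rtake_length_sub c,
    hx, hy, htake, hrtake]

theorem l2normOn_convol_sphere_le [Finite α] {n m : ℕ} {a b : FreeGroup α → ℂ}
    (ha : ∀ g, a g ≠ 0 → norm g = n) (hb : ∀ g, b g ≠ 0 → norm g = m) (k : ℕ) :
    l2normOn (convol a b) {g | norm g = k} ≤ l2normOn a Set.univ * l2normOn b Set.univ := by
  have ha' : ∀ x ∉ sphere n, a x = 0 := fun x hx => by_contra fun h => hx (mem_sphere.2 (ha x h))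
  have hb' : ∀ x ∉ sphere m, b x = 0 := fun x hx => by_contra fun h => hx (mem_sphere.2 (hb x h))
  rw [← coe_sphere, l2normOn_coe_finset, l2normOn_univ_eq ha', l2normOn_univ_eq hb',
    ← Real.sqrt_mul (by positivity)]
  refine Real.sqrt_le_sqrt ?_
  simp_rw [convol_eq_sum ha']
  set c := (n + k - m) / 2
  refine sum_norm_sum_mul_sq_le_of_fibers hb' (p := fun x => x.toWord.take c)
    (q := fun x => x.toWord.rtake (k - c)) ((injOn_take_rtake_toWord c k).mono ?_) ?_
  · exact (coe_sphere k).subset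
  · intro g hg h hah hbh
    rw [mem_sphere] at hg
    have hc : norm (h⁻¹ * g) + 2 * c = norm h + norm g := by
      obtain ⟨c', -, -, hc'⟩ := exists_norm_inv_mul_add_two_mul h g
      rw [ha h hah, hb _ hbh, hg] at hc' ⊢
      omega
    simpa only [hg] using take_eq_and_rtake_eq_of_norm_inv_mul hc

end FreeGroup

/-- Haagerup's convolution inequality on free groups: if `a` is supported on the sphere `S_n`
and `b` on `S_m`, then `‖(a*b)·1_{S_k}‖₂ ≤ ‖a‖₂ ‖b‖₂` whenever `|n-m| ≤ k ≤ n+m` and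
`k ≡ n+m (mod 2)`, and `(a*b)·1_{S_k} = 0` for every other `k`. -/
theorem stmt_16 {α : Type*} [Fintype α] [DecidableEq α] (n m : ℕ)
    (a b : FreeGroup α → ℂ)
    (ha : ∀ g, a g ≠ 0 → FreeGroup.norm g = n)
    (hb : ∀ g, b g ≠ 0 → FreeGroup.norm g = m) :
    (∀ k : ℕ, n ≤ m + k → m ≤ n + k → k ≤ n + m → (n + m) % 2 = k % 2 →
        l2normOn (convol a b) {g | FreeGroup.norm g = k} ≤
          l2normOn a Set.univ * l2normOn b Set.univ) ∧
      ∀ k : ℕ, ¬(n ≤ m + k ∧ m ≤ n + k ∧ k ≤ n + m ∧ (n + m) % 2 = k % 2) →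
        ∀ g : FreeGroup α, FreeGroup.norm g = k → convol a b g = 0 :=
  ⟨fun k _ _ _ _ => FreeGroup.l2normOn_convol_sphere_le ha hb k,
    fun _ hk _ hg => by_contra fun h =>
      hk (hg ▸ FreeGroup.triangle_parity_of_convol_ne_zero ha hb h)⟩
end
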